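/- The Lebesgue integral extends the Riemann integral: let a < b and let f : ℝ → ℝ be Riemann integrable on [a,b] with Riemann integral I ∈ ℝ. Then f is Lebesgue integrable on [a,b] (IntegrableOn f (Icc a b) with respect to volume) and its Lebesgue integral over [a,b] equals I: ∫ x in Icc a b, f x ∂volume = I. -/

import Mathlib

/-!
Fix `ε > 0` and a partition of mesh below the `δ` it provides. Every Riemann sum over this
partition lies within `ε` of `I`, whatever the tags. Moving a single tag then shows that `f` is
bounded on each cell, and moving all tags towards the cell suprema (infima) shows that the upper
(lower) Darboux sum lies within `ε` of `I`. These Darboux sums are the Lebesgue integrals of step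
functions `g ≤ f ≤ h` on `[a, b)`. For such squeezes with gaps tending to zero, the supremum `G`
of the lower functions and the infimum `H` of the upper ones are integrable, `G ≤ f ≤ H`, and
`∫ (H - G) = 0`; hence `f = G` almost everywhere.
-/

open Set MeasureTheory

/-- `f` is Riemann integrable on `[a,b]` with integral `I`: for every `ε > 0` there is
`δ > 0` such that every tagged partition of `[a,b]` of mesh less than `δ` has Riemann
sum within `ε` of `I`. -/
def RiemannIntegralOn (f : ℝ → ℝ) (a b I : ℝ) : Prop :=
  ∀ ε : ℝ, 0 < ε → ∃ δ : ℝ, 0 < δ ∧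
    ∀ (N : ℕ) (x t : ℕ → ℝ),
      x 0 = a → x N = b →
      (∀ i < N, x i < x (i + 1)) →
      (∀ i < N, x (i + 1) - x i < δ) →
      (∀ i < N, t i ∈ Icc (x i) (x (i + 1))) →
      |(∑ i ∈ Finset.range N, f (t i) * (x (i + 1) - x i)) - I| < ε

open Filter Topology

theorem exists_mem_Ico_succ_of_mem_Ico {α : Type*} [LinearOrder α] {x : ℕ → α} {y : α} :
    ∀ {N : ℕ}, y ∈ Ico (x 0) (x N) → ∃ i < N, y ∈ Ico (x i) (x (i + 1))
  | 0, hy => absurd hy (by simp)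
  | N + 1, hy => by
    rcases lt_or_ge y (x N) with hyN | hNy
    · obtain ⟨i, hi, hyi⟩ := exists_mem_Ico_succ_of_mem_Ico ⟨hy.1, hyN⟩
      exact ⟨i, hi.trans N.lt_succ_self, hyi⟩
    · exact ⟨N, N.lt_succ_self, hNy, hy.2⟩

theorem exists_strictMono_partition_mesh_lt {a b δ : ℝ} (hab : a < b) (hδ : 0 < δ) :
    ∃ (N : ℕ) (x : ℕ → ℝ), StrictMono x ∧ x 0 = a ∧ x N = b ∧ ∀ i, x (i + 1) - x i < δ := by
  obtain ⟨N, hN⟩ := exists_nat_gt ((b - a) / δ)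
  have hN0 : (0 : ℝ) < N := (div_pos (sub_pos.2 hab) hδ).trans hN
  refine ⟨N, fun i => a + i * ((b - a) / N), fun i j hij => ?_, by simp, ?_, fun i => ?_⟩
  · dsimp only
    gcongr
  · field_simp
    ring
  · rw [div_lt_iff₀ hδ] at hN
    calc a + ↑(i + 1) * ((b - a) / N) - (a + i * ((b - a) / N)) = (b - a) / N := by
          push_cast; ring
      _ < δ := by rw [div_lt_iff₀ hN0]; linarith

section StepFunction

variable {x : ℕ → ℝ} {N : ℕ}

noncomputable def stepFunction (x : ℕ → ℝ) (N : ℕ) (c : ℕ → ℝ) (y : ℝ) : ℝ :=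
  ∑ i ∈ Finset.range N, (Ico (x i) (x (i + 1))).indicator (fun _ => c i) y

theorem stepFunction_eq (hx : Monotone x) (c : ℕ → ℝ) {i : ℕ} (hi : i < N) {y : ℝ}
    (hy : y ∈ Ico (x i) (x (i + 1))) : stepFunction x N c y = c i := by
  rw [stepFunction, Finset.sum_eq_single_of_mem i (Finset.mem_range.2 hi), indicator_of_mem hy]
  intro j _ hji
  exact indicator_of_notMem (Set.disjoint_left.1 (hx.pairwise_disjoint_on_Ico_succ hji.symm) hy) _

theorem integrable_indicator_Ico (c : ℝ) (u v : ℝ) :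
    Integrable ((Ico u v).indicator fun _ => c) :=
  (integrable_indicator_iff measurableSet_Ico).2 (integrableOn_const measure_Ico_lt_top.ne)

theorem integrable_stepFunction (c : ℕ → ℝ) : Integrable (stepFunction x N c) :=
  integrable_finsetSum _ fun i _ => integrable_indicator_Ico (c i) _ _

theorem integral_stepFunction (hx : Monotone x) (c : ℕ → ℝ) :
    ∫ y in Icc (x 0) (x N), stepFunction x N c y =
      ∑ i ∈ Finset.range N, c i * (x (i + 1) - x i) := by
  unfold stepFunction
  rw [integral_finsetSum _ fun i _ => (integrable_indicator_Ico (c i) _ _).restrict]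
  refine Finset.sum_congr rfl fun i hi => ?_
  have hsub : Ico (x i) (x (i + 1)) ⊆ Icc (x 0) (x N) :=
    Ico_subset_Icc_self.trans (Icc_subset_Icc (hx i.zero_le) (hx (Finset.mem_range.1 hi)))
  rw [setIntegral_indicator measurableSet_Ico, inter_eq_right.2 hsub, setIntegral_const,
    Real.volume_real_Ico_of_le (hx i.le_succ), smul_eq_mul, mul_comm]

end StepFunction

section RiemannSum

variable {f : ℝ → ℝ} {N : ℕ} {x t : ℕ → ℝ} {I ε B : ℝ}

def riemannSum (f : ℝ → ℝ) (N : ℕ) (x t : ℕ → ℝ) : ℝ :=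
  ∑ i ∈ Finset.range N, f (t i) * (x (i + 1) - x i)

noncomputable def cellSup (f : ℝ → ℝ) (x : ℕ → ℝ) (i : ℕ) : ℝ := sSup (f '' Icc (x i) (x (i + 1)))

noncomputable def cellInf (f : ℝ → ℝ) (x : ℕ → ℝ) (i : ℕ) : ℝ := sInf (f '' Icc (x i) (x (i + 1)))

theorem riemannSum_neg : riemannSum (fun y => -f y) N x t = -riemannSum f N x t := by
  simp only [riemannSum, neg_mul, Finset.sum_neg_distrib]

theorem cellInf_eq_neg_cellSup_neg (i : ℕ) : cellInf f x i = -cellSup (fun y => -f y) x i := by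
  rw [cellInf, cellSup, Real.sInf_def, ← Set.image_neg_eq_neg, image_image]

theorem riemannSum_update_sub {i : ℕ} (hi : i < N) (s : ℝ) :
    riemannSum f N x (Function.update t i s) - riemannSum f N x t =
      (f s - f (t i)) * (x (i + 1) - x i) := by
  rw [riemannSum, riemannSum, ← Finset.sum_sub_distrib,
    Finset.sum_eq_single_of_mem i (Finset.mem_range.2 hi)]
  · rw [Function.update_self, sub_mul]
  · intro j _ hji
    rw [Function.update_of_ne hji, sub_self]

theorem isBounded_image_Icc_of_riemannSum (hx : Monotone x)
    (hS : ∀ t, (∀ i < N, t i ∈ Icc (x i) (x (i + 1))) → |riemannSum f N x t - I| < ε)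
    {i : ℕ} (hi : i < N) (hxi : x i < x (i + 1)) :
    Bornology.IsBounded (f '' Icc (x i) (x (i + 1))) := by
  refine (Metric.isBounded_closedBall (x := f (x i)) (r := 2 * ε / (x (i + 1) - x i))).subset ?_
  rintro _ ⟨s, hs, rfl⟩
  have hleft : ∀ j < N, x j ∈ Icc (x j) (x (j + 1)) := fun j _ => ⟨le_rfl, hx j.le_succ⟩
  have hupdate : ∀ j < N, Function.update x i s j ∈ Icc (x j) (x (j + 1)) := by
    intro j hj
    rcases eq_or_ne j i with rfl | hji
    · rwa [Function.update_self]
    · rw [Function.update_of_ne hji]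
      exact hleft j hj
  have h₁ := hS _ hleft
  have h₂ := hS _ hupdate
  rw [Metric.mem_closedBall, Real.dist_eq, le_div_iff₀ (sub_pos.2 hxi)]
  calc |f s - f (x i)| * (x (i + 1) - x i)
      = |riemannSum f N x (Function.update x i s) - riemannSum f N x x| := by
        rw [riemannSum_update_sub hi, abs_mul, abs_of_pos (sub_pos.2 hxi)]
    _ ≤ |riemannSum f N x (Function.update x i s) - I| + |I - riemannSum f N x x| :=
        abs_sub_le _ _ _
    _ ≤ 2 * ε := by rw [abs_sub_comm I]; linarith

theorem sum_cellSup_le (hx : Monotone x)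
    (hS : ∀ t, (∀ i < N, t i ∈ Icc (x i) (x (i + 1))) → riemannSum f N x t < B) :
    ∑ i ∈ Finset.range N, cellSup f x i * (x (i + 1) - x i) ≤ B := by
  have hη : ∀ η > 0,
      ∑ i ∈ Finset.range N, cellSup f x i * (x (i + 1) - x i) ≤ B + η * (x N - x 0) := by
    intro η hη
    have hnear : ∀ i, ∃ u ∈ Icc (x i) (x (i + 1)), cellSup f x i - η < f u := fun i => by
      obtain ⟨_, ⟨u, hu, rfl⟩, hlt⟩ :=
        exists_lt_of_lt_csSup ((nonempty_Icc.2 (hx i.le_succ)).image f) (sub_lt_self _ hη)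
      exact ⟨u, hu, hlt⟩
    choose u hu hfu using hnear
    calc ∑ i ∈ Finset.range N, cellSup f x i * (x (i + 1) - x i)
        = ∑ i ∈ Finset.range N, (cellSup f x i - η) * (x (i + 1) - x i) + η * (x N - x 0) := by
          rw [← Finset.sum_range_sub x, Finset.mul_sum, ← Finset.sum_add_distrib]
          exact Finset.sum_congr rfl fun i _ => by ring
      _ ≤ riemannSum f N x u + η * (x N - x 0) := by
          gcongr
          exact Finset.sum_le_sum fun i _ =>
            mul_le_mul_of_nonneg_right (hfu i).le (sub_nonneg.2 (hx i.le_succ))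
      _ ≤ B + η * (x N - x 0) := by linarith [hS u fun i _ => hu i]
  have hlim : Tendsto (fun η : ℝ => B + η * (x N - x 0)) (𝓝[>] 0) (𝓝 B) :=
    tendsto_nhdsWithin_of_tendsto_nhds <|
      (by fun_prop : Continuous fun η : ℝ => B + η * (x N - x 0)).tendsto' 0 B (by simp)
  exact ge_of_tendsto hlim (eventually_nhdsWithin_of_forall hη)

theorem le_sum_cellInf (hx : Monotone x)
    (hS : ∀ t, (∀ i < N, t i ∈ Icc (x i) (x (i + 1))) → B < riemannSum f N x t) :
    B ≤ ∑ i ∈ Finset.range N, cellInf f x i * (x (i + 1) - x i) := by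
  have := sum_cellSup_le (f := fun y => -f y) (B := -B) hx fun t ht => by
    rw [riemannSum_neg]; linarith [hS t ht]
  simp only [cellInf_eq_neg_cellSup_neg, neg_mul, Finset.sum_neg_distrib]
  linarith

end RiemannSum

section Squeeze

variable {α : Type*} [MeasurableSpace α] {μ : Measure α}

theorem integrable_of_squeeze {f : α → ℝ} {g h : ℕ → α → ℝ}
    (hg : ∀ n, Integrable (g n) μ) (hh : ∀ n, Integrable (h n) μ)
    (hgf : ∀ n, g n ≤ᵐ[μ] f) (hfh : ∀ n, f ≤ᵐ[μ] h n)
    (hgap : Tendsto (fun n => ∫ x, h n x ∂μ - ∫ x, g n x ∂μ) atTop (𝓝 0)) :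
    Integrable f μ := by
  set G : α → ℝ := fun x => ⨆ n, g n x
  set H : α → ℝ := fun x => ⨅ n, h n x
  have hGH : ∀ᵐ x ∂μ, (∀ n, g n x ≤ G x) ∧ G x ≤ f x ∧ f x ≤ H x ∧ ∀ n, H x ≤ h n x := by
    filter_upwards [ae_all_iff.2 hgf, ae_all_iff.2 hfh] with x hgx hhx
    exact ⟨le_ciSup ⟨f x, forall_mem_range.2 hgx⟩, ciSup_le hgx, le_ciInf hhx,
      ciInf_le ⟨f x, forall_mem_range.2 hhx⟩⟩
  have hGi : Integrable G μ :=
    integrable_of_le_of_le (AEMeasurable.iSup fun n => (hg n).aemeasurable).aestronglyMeasurable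
      (hGH.mono fun x hx => hx.1 0)
      (hGH.mono fun x hx => hx.2.1.trans (hx.2.2.1.trans (hx.2.2.2 0)))
      (hg 0) (hh 0)
  have hHi : Integrable H μ :=
    integrable_of_le_of_le (AEMeasurable.iInf fun n => (hh n).aemeasurable).aestronglyMeasurable
      (hGH.mono fun x hx => (hx.1 0).trans (hx.2.1.trans hx.2.2.1))
      (hGH.mono fun x hx => hx.2.2.2 0)
      (hg 0) (hh 0)
  have hGH_nonneg : 0 ≤ᵐ[μ] fun x => H x - G x :=
    hGH.mono fun x hx => sub_nonneg.2 (hx.2.1.trans hx.2.2.1)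
  have hle_gap : ∀ n, ∫ x, H x - G x ∂μ ≤ ∫ x, h n x ∂μ - ∫ x, g n x ∂μ := fun n => by
    rw [integral_sub hHi hGi]
    exact sub_le_sub (integral_mono_ae hHi (hh n) (hGH.mono fun x hx => hx.2.2.2 n))
      (integral_mono_ae (hg n) hGi (hGH.mono fun x hx => hx.1 n))
  have hHG : H =ᵐ[μ] G := by
    have hzero : ∫ x, H x - G x ∂μ = 0 :=
      le_antisymm (ge_of_tendsto' hgap hle_gap) (integral_nonneg_of_ae hGH_nonneg)
    filter_upwards [(integral_eq_zero_iff_of_nonneg_ae hGH_nonneg (hHi.sub hGi)).1 hzero]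
      with x hx using sub_eq_zero.1 hx
  refine hGi.congr ?_
  filter_upwards [hGH, hHG] with x hx hHGx
  exact hx.2.1.antisymm (hHGx ▸ hx.2.2.1)

theorem integrable_and_integral_eq_of_squeeze {f : α → ℝ} {I : ℝ}
    (hsq : ∀ ε > 0, ∃ g h : α → ℝ, Integrable g μ ∧ Integrable h μ ∧ g ≤ᵐ[μ] f ∧ f ≤ᵐ[μ] h ∧
      I - ε ≤ ∫ x, g x ∂μ ∧ ∫ x, h x ∂μ ≤ I + ε) :
    Integrable f μ ∧ ∫ x, f x ∂μ = I := by
  have hf : Integrable f μ := by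
    choose g h hg hh hgf hfh hIg hhI using fun n : ℕ => hsq (1 / (n + 1)) Nat.one_div_pos_of_nat
    refine integrable_of_squeeze hg hh hgf hfh (squeeze_zero (fun n => ?_) (fun n => ?_)
      (by simpa using (tendsto_one_div_add_atTop_nhds_zero_nat (𝕜 := ℝ)).const_mul 2 :
        Tendsto (fun n : ℕ => 2 * (1 / ((n : ℝ) + 1))) atTop (𝓝 0)))
    · exact sub_nonneg.2 (integral_mono_ae (hg n) (hh n) ((hgf n).trans (hfh n)))
    · linarith [hIg n, hhI n]
  refine ⟨hf, eq_of_forall_dist_le fun ε hε => ?_⟩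
  obtain ⟨g, h, hg, hh, hgf, hfh, hIg, hhI⟩ := hsq ε hε
  have := integral_mono_ae hg hf hgf
  have := integral_mono_ae hf hh hfh
  rw [Real.dist_eq, abs_le]
  constructor <;> linarith

end Squeeze

theorem RiemannIntegralOn.exists_squeeze {f : ℝ → ℝ} {a b I ε : ℝ} (hab : a < b)
    (hf : RiemannIntegralOn f a b I) (hε : 0 < ε) :
    ∃ g h : ℝ → ℝ, IntegrableOn g (Icc a b) ∧ IntegrableOn h (Icc a b) ∧
      g ≤ᵐ[volume.restrict (Icc a b)] f ∧ f ≤ᵐ[volume.restrict (Icc a b)] h ∧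
      I - ε ≤ ∫ y in Icc a b, g y ∧ ∫ y in Icc a b, h y ≤ I + ε := by
  obtain ⟨δ, hδ, hR⟩ := hf ε hε
  obtain ⟨N, x, hx, rfl, rfl, hmesh⟩ := exists_strictMono_partition_mesh_lt hab hδ
  have hS : ∀ t, (∀ i < N, t i ∈ Icc (x i) (x (i + 1))) → |riemannSum f N x t - I| < ε :=
    fun t ht => hR N x t rfl rfl (fun i _ => hx i.lt_succ_self) (fun i _ => hmesh i) ht
  have hbdd : ∀ i < N, Bornology.IsBounded (f '' Icc (x i) (x (i + 1))) := fun i hi =>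
    isBounded_image_Icc_of_riemannSum hx.monotone hS hi (hx i.lt_succ_self)
  have hIco : ∀ᵐ y ∂volume.restrict (Icc (x 0) (x N)), y ∈ Ico (x 0) (x N) := by
    rw [← Measure.restrict_congr_set Ico_ae_eq_Icc]
    exact ae_restrict_mem measurableSet_Ico
  refine ⟨stepFunction x N (cellInf f x), stepFunction x N (cellSup f x),
    (integrable_stepFunction _).integrableOn, (integrable_stepFunction _).integrableOn,
    hIco.mono fun y hy => ?_, hIco.mono fun y hy => ?_, ?_, ?_⟩
  · obtain ⟨i, hi, hyi⟩ := exists_mem_Ico_succ_of_mem_Ico hy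
    rw [stepFunction_eq hx.monotone _ hi hyi]
    exact csInf_le (hbdd i hi).bddBelow (mem_image_of_mem f (Ico_subset_Icc_self hyi))
  · obtain ⟨i, hi, hyi⟩ := exists_mem_Ico_succ_of_mem_Ico hy
    rw [stepFunction_eq hx.monotone _ hi hyi]
    exact le_csSup (hbdd i hi).bddAbove (mem_image_of_mem f (Ico_subset_Icc_self hyi))
  · rw [integral_stepFunction hx.monotone]
    exact le_sum_cellInf hx.monotone fun t ht => by linarith [abs_lt.1 (hS t ht)]
  · rw [integral_stepFunction hx.monotone]
    exact sum_cellSup_le hx.monotone fun t ht => by linarith [abs_lt.1 (hS t ht)]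

/-- The Lebesgue integral extends the Riemann integral. -/
theorem lebesgue_extends_riemann
    (a b : ℝ) (hab : a < b) (f : ℝ → ℝ) (I : ℝ)
    (hf : RiemannIntegralOn f a b I) :
    IntegrableOn f (Icc a b) volume ∧ ∫ x in Icc a b, f x ∂volume = I :=
  integrable_and_integral_eq_of_squeeze fun _ hε => hf.exists_squeeze hab hε
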